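/- arXiv:1105.0103 — 6 statements merged into one kernel-verified Lean document; each statement's English description precedes it below -/
import Mathlib

section
/- Let P be a finite set of points in the Euclidean plane and k a natural number. If every closed disk of radius 1 contains at most k points of P, then every closed disk of radius 2 contains at most 9k points of P. -/
/-!
Split the square `[-2, 2]²` around the centre into a `3 × 3` grid of squares of side `4/3`.
Each of them has half-diagonal `(2/3)√2 < 1`, so the disk of radius 2 is covered by the nine unit
disks centred at the grid points `c + (a, b)`, `a, b ∈ {-4/3, 0, 4/3}`, each holding at most `k`
points of `P`.
-/

open Metric

lemma Set.ncard_inter_le_card_mul_of_subset_biUnion {α ι : Type*} {P S : Set α} (hP : P.Finite)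
    {C : Finset ι} {B : ι → Set α} {k : ℕ} (hS : S ⊆ ⋃ i ∈ C, B i)
    (hB : ∀ i ∈ C, (P ∩ B i).ncard ≤ k) :
    (P ∩ S).ncard ≤ C.card * k := by
  have hsub : P ∩ S ⊆ ⋃ i ∈ C, P ∩ B i := by
    rw [← Set.inter_iUnion₂]
    exact Set.inter_subset_inter_right P hS
  calc (P ∩ S).ncard ≤ (⋃ i ∈ C, P ∩ B i).ncard :=
        Set.ncard_le_ncard hsub (hP.subset (Set.iUnion₂_subset fun _ _ => Set.inter_subset_left))
    _ ≤ ∑ i ∈ C, (P ∩ B i).ncard := C.set_ncard_biUnion_le _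
    _ ≤ ∑ _i ∈ C, k := Finset.sum_le_sum hB
    _ = C.card * k := by rw [Finset.sum_const, smul_eq_mul]

noncomputable def gridOffsets : Finset ℝ := {-4/3, 0, 4/3}

lemma card_gridOffsets_le : gridOffsets.card ≤ 3 := Finset.card_le_three

lemma exists_mem_gridOffsets_abs_sub_le {t : ℝ} (ht : |t| ≤ 2) :
    ∃ a ∈ gridOffsets, |t - a| ≤ 2/3 := by
  rw [abs_le] at ht
  simp only [gridOffsets, Finset.mem_insert, Finset.mem_singleton, exists_eq_or_imp,
    exists_eq_left, abs_le]
  by_cases h₁ : t ≤ -2/3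
  · left; constructor <;> linarith
  by_cases h₂ : t ≤ 2/3
  · right; left; constructor <;> linarith
  · right; right; constructor <;> linarith

noncomputable def gridCenters (c : EuclideanSpace ℝ (Fin 2)) : Finset (EuclideanSpace ℝ (Fin 2)) :=
  (gridOffsets ×ˢ gridOffsets).image fun a => c + !₂[a.1, a.2]

lemma card_gridCenters_le (c : EuclideanSpace ℝ (Fin 2)) : (gridCenters c).card ≤ 9 :=
  calc (gridCenters c).card ≤ (gridOffsets ×ˢ gridOffsets).card := Finset.card_image_le
    _ = gridOffsets.card * gridOffsets.card := Finset.card_product _ _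
    _ ≤ 3 * 3 := Nat.mul_le_mul card_gridOffsets_le card_gridOffsets_le

lemma closedBall_two_subset_biUnion_gridCenters (c : EuclideanSpace ℝ (Fin 2)) :
    closedBall c 2 ⊆ ⋃ s ∈ gridCenters c, closedBall s 1 := by
  intro p hp
  have hcoord (i : Fin 2) : |p i - c i| ≤ 2 := by
    rw [← Real.dist_eq]
    exact (PiLp.dist_apply_le p c i).trans (mem_closedBall.mp hp)
  obtain ⟨a, ha, hpa⟩ := exists_mem_gridOffsets_abs_sub_le (hcoord 0)
  obtain ⟨b, hb, hpb⟩ := exists_mem_gridOffsets_abs_sub_le (hcoord 1)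
  have hs : c + !₂[a, b] ∈ gridCenters c :=
    Finset.mem_image.mpr ⟨(a, b), Finset.mem_product.mpr ⟨ha, hb⟩, rfl⟩
  refine Set.mem_biUnion (Finset.mem_coe.mpr hs) ?_
  rw [mem_closedBall, EuclideanSpace.dist_eq, Fin.sum_univ_two]
  refine Real.sqrt_le_one.mpr ?_
  have hsq {x : ℝ} (hx : |x| ≤ 2/3) : x ^ 2 ≤ 4/9 := by nlinarith [abs_nonneg x, sq_abs x]
  simp only [Real.dist_eq, sq_abs, PiLp.add_apply, Matrix.cons_val_zero, Matrix.cons_val_one,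
    Matrix.cons_val_fin_one, sub_add_eq_sub_sub]
  linarith [hsq hpa, hsq hpb]

/-- If every closed disk of radius 1 contains at most `k` points of a finite set `P`
in the plane, then every closed disk of radius 2 contains at most `9 * k` points of `P`. -/
theorem card_in_closedBall_two_le_nine_mul
    (P : Finset (EuclideanSpace ℝ (Fin 2))) (k : ℕ)
    (h : ∀ c : EuclideanSpace ℝ (Fin 2),
      ((P : Set (EuclideanSpace ℝ (Fin 2))) ∩ Metric.closedBall c 1).ncard ≤ k) :
    ∀ c : EuclideanSpace ℝ (Fin 2),
      ((P : Set (EuclideanSpace ℝ (Fin 2))) ∩ Metric.closedBall c 2).ncard ≤ 9 * k := by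
  intro c
  calc _ ≤ (gridCenters c).card * k :=
        Set.ncard_inter_le_card_mul_of_subset_biUnion P.finite_toSet
          (closedBall_two_subset_biUnion_gridCenters c) fun s _ => h s
    _ ≤ 9 * k := Nat.mul_le_mul_right k (card_gridCenters_le c)
end

section
/- Let D₀, …, D_{n-1} be pairwise interior-disjoint closed disks in the Euclidean plane with centers p₀, …, p_{n-1} and positive radii, and let G be their intersection graph on Fin n. Assume that every closed disk of radius 1 contains at most n/10 of the centers p_i, and that the closed disk of radius 1 centered at the origin contains at least n/10 of the centers. Let x ∈ [1,2], let C_x be the circle of radius x centered at the origin, and let S = {i : D_i ∩ C_x ≠ ∅}. Then every connected component of the induced subgraph of G on the complement of S has at most (9/10)·n vertices. -/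
/-!
A disk of the family that misses the circle `C_x` lies entirely inside it or entirely outside it,
and two intersecting disks lie on the same side, so every component of the graph left after
deleting `S` has all its centers inside `C_x` or all of them outside. Inside, the centers lie in
the disk of radius `2`, which nine unit disks cover, so there are at most `9n/10` of them.
Outside, the centers avoid the unit disk at the origin, which holds at least `n/10` centers.
-/

open Metric Set

local notation "ℝ²" => EuclideanSpace ℝ (Fin 2)

theorem SimpleGraph.Reachable.iff_of_forall_adj {V : Type*} {G : SimpleGraph V}
    {P : V → Prop} (hP : ∀ ⦃u v⦄, G.Adj u v → (P u ↔ P v)) {u v : V}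
    (h : G.Reachable u v) : P u ↔ P v := by
  obtain ⟨w⟩ := h
  induction w with
  | nil => rfl
  | cons huv _ ih => exact (hP huv).trans ih

theorem IsPreconnected.subset_ball_or_subset_compl_closedBall {X : Type*} [PseudoMetricSpace X]
    {K : Set X} (hK : IsPreconnected K) {c : X} {x : ℝ} (h : Disjoint K (sphere c x)) :
    K ⊆ ball c x ∨ K ⊆ (closedBall c x)ᶜ := by
  refine hK.subset_or_subset isOpen_ball isClosed_closedBall.isOpen_compl
    (disjoint_compl_right.mono_left ball_subset_closedBall) fun y hy => ?_
  rcases lt_trichotomy (dist y c) x with hlt | heq | hgt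
  · exact Or.inl hlt
  · exact absurd (mem_sphere.mpr heq) (h.notMem_of_mem_left hy)
  · exact Or.inr (not_le.mpr hgt)

section SidesOfSphere

variable {X ι : Type*} [PseudoMetricSpace X] {D : ι → Set X} {G : SimpleGraph ι} {S : Set ι}
  {c : X} {x : ℝ}

theorem subset_ball_iff_of_induce_compl_adj (hD : ∀ i, IsPreconnected (D i))
    (hG : ∀ i j, G.Adj i j → (D i ∩ D j).Nonempty)
    (hS : ∀ i ∉ S, Disjoint (D i) (sphere c x)) ⦃u v : ↥Sᶜ⦄
    (huv : (G.induce Sᶜ).Adj u v) :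
    D u ⊆ ball c x ↔ D v ⊆ ball c x := by
  have inside_of_inside : ∀ i j : ↥Sᶜ, (D i ∩ D j).Nonempty →
      D i ⊆ ball c x → D j ⊆ ball c x := by
    rintro i j ⟨y, hyi, hyj⟩ hi
    refine ((hD j).subset_ball_or_subset_compl_closedBall (hS j j.prop)).resolve_right
      fun hj => hj hyj ?_
    exact ball_subset_closedBall (hi hyi)
  have hmeet := hG u v huv
  exact ⟨inside_of_inside u v hmeet, inside_of_inside v u (inter_comm (D u) (D v) ▸ hmeet)⟩

theorem SimpleGraph.ConnectedComponent.subset_ball_or_subset_compl_closedBall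
    (hD : ∀ i, IsPreconnected (D i)) (hG : ∀ i j, G.Adj i j → (D i ∩ D j).Nonempty)
    (hS : ∀ i ∉ S, Disjoint (D i) (sphere c x)) (C : (G.induce Sᶜ).ConnectedComponent) :
    (∀ v ∈ C.supp, D v ⊆ Metric.ball c x) ∨
      (∀ v ∈ C.supp, D v ⊆ (Metric.closedBall c x)ᶜ) := by
  obtain ⟨v₀, rfl⟩ := C.exists_rep
  have same_side : ∀ v ∈ ((G.induce Sᶜ).connectedComponentMk v₀).supp,
      D v₀ ⊆ Metric.ball c x ↔ D v ⊆ Metric.ball c x := fun v hv =>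
    Reachable.iff_of_forall_adj (P := fun v : ↥Sᶜ => D v ⊆ Metric.ball c x)
      (subset_ball_iff_of_induce_compl_adj hD hG hS)
      (ConnectedComponent.exact hv.symm)
  by_cases hin : D v₀ ⊆ Metric.ball c x
  · exact Or.inl fun v hv => (same_side v hv).mp hin
  · refine Or.inr fun v hv => ?_
    exact ((hD v).subset_ball_or_subset_compl_closedBall (hS v v.prop)).resolve_left
      fun h => hin ((same_side v hv).mpr h)

end SidesOfSphere

theorem cast_ncard_preimage_le_card_mul {ι X : Type*} [Finite ι] (p : ι → X) {s : Set X}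
    {T : Finset X} {U : X → Set X} (hs : s ⊆ ⋃ c ∈ T, U c) {m : ℝ}
    (hm : ∀ c, ((p ⁻¹' U c).ncard : ℝ) ≤ m) :
    ((p ⁻¹' s).ncard : ℝ) ≤ T.card * m := by
  calc ((p ⁻¹' s).ncard : ℝ) ≤ ((⋃ c ∈ T, p ⁻¹' U c).ncard : ℝ) := by
        rw [← preimage_iUnion₂]
        exact_mod_cast ncard_le_ncard (preimage_mono hs)
    _ ≤ ∑ c ∈ T, ((p ⁻¹' U c).ncard : ℝ) := by exact_mod_cast T.set_ncard_biUnion_le _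
    _ ≤ ∑ c ∈ T, m := Finset.sum_le_sum fun c _ => hm c
    _ = T.card * m := by rw [Finset.sum_const, nsmul_eq_mul]

theorem cast_ncard_compl_le {α : Type*} [Finite α] {s : Set α} {m : ℝ} (h : m ≤ s.ncard) :
    (sᶜ.ncard : ℝ) ≤ Nat.card α - m := by
  rw [← ncard_add_ncard_compl s]
  push_cast
  linarith

noncomputable def gridCoords : Finset ℝ := {-4/3, 0, 4/3}

noncomputable def nineGrid : Finset (ℝ²) :=
  (gridCoords ×ˢ gridCoords).image fun ab => !₂[ab.1, ab.2]

theorem card_nineGrid_le : nineGrid.card ≤ 9 :=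
  Finset.card_image_le.trans <| by
    rw [Finset.card_product]
    exact Nat.mul_le_mul Finset.card_le_three Finset.card_le_three

theorem exists_mem_gridCoords_abs_sub_le {t : ℝ} (ht : |t| ≤ 2) :
    ∃ a ∈ gridCoords, |t - a| ≤ 2/3 := by
  rw [abs_le] at ht
  simp only [gridCoords, Finset.mem_insert, Finset.mem_singleton, exists_eq_or_imp,
    exists_eq_left, abs_le]
  by_cases h₁ : t ≤ -2/3
  · exact Or.inl ⟨by linarith, by linarith⟩
  by_cases h₂ : t ≤ 2/3
  · exact Or.inr (Or.inl ⟨by linarith, by linarith⟩)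
  · exact Or.inr (Or.inr ⟨by linarith, by linarith⟩)

/-- Each coordinate of a point of the disk of radius `2` is within `2/3` of `gridCoords`, and
`2 (2/3)² < 1`. -/
theorem closedBall_two_subset_biUnion_nineGrid :
    closedBall (0 : ℝ²) 2 ⊆ ⋃ c ∈ nineGrid, closedBall c 1 := by
  intro q hq
  have hcoord : ∀ j, |q j| ≤ 2 := fun j =>
    (PiLp.norm_apply_le q j).trans (mem_closedBall_zero_iff.mp hq)
  obtain ⟨a, ha, hqa⟩ := exists_mem_gridCoords_abs_sub_le (hcoord 0)
  obtain ⟨b, hb, hqb⟩ := exists_mem_gridCoords_abs_sub_le (hcoord 1)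
  have hgrid : !₂[a, b] ∈ nineGrid :=
    Finset.mem_image.mpr ⟨(a, b), Finset.mem_product.mpr ⟨ha, hb⟩, rfl⟩
  refine mem_iUnion₂.mpr ⟨!₂[a, b], hgrid, ?_⟩
  have hsq : |q 0 - a| ^ 2 + |q 1 - b| ^ 2 ≤ 1 := by
    nlinarith [abs_nonneg (q 0 - a), abs_nonneg (q 1 - b)]
  rw [mem_closedBall, EuclideanSpace.dist_eq, Fin.sum_univ_two, ← Real.sqrt_one]
  simpa [Real.dist_eq] using Real.sqrt_le_sqrt hsq

theorem cast_ncard_closedBall_two_le {ι : Type*} [Finite ι] (p : ι → ℝ²)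
    {m : ℝ} (hm : ∀ c, (({i | p i ∈ closedBall c 1}).ncard : ℝ) ≤ m) :
    (({i | p i ∈ closedBall (0 : ℝ²) 2}).ncard : ℝ) ≤ 9 * m := by
  have hm₀ : 0 ≤ m := (Nat.cast_nonneg _).trans (hm 0)
  calc _ ≤ nineGrid.card * m := cast_ncard_preimage_le_card_mul p
        closedBall_two_subset_biUnion_nineGrid hm
    _ ≤ 9 * m := by gcongr; exact_mod_cast card_nineGrid_le

theorem separator_components_small_general
    (n : ℕ) (p : Fin n → EuclideanSpace ℝ (Fin 2)) (r : Fin n → ℝ)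
    (hr : ∀ i, 0 < r i)
    (G : SimpleGraph (Fin n))
    (hG : ∀ i j, G.Adj i j ↔ i ≠ j ∧
      (Metric.closedBall (p i) (r i) ∩ Metric.closedBall (p j) (r j)).Nonempty)
    (hdense : ∀ c : EuclideanSpace ℝ (Fin 2),
      (({i : Fin n | p i ∈ Metric.closedBall c 1}).ncard : ℝ) ≤ n / 10)
    (horigin : (n : ℝ) / 10 ≤
      (({i : Fin n | p i ∈ Metric.closedBall (0 : EuclideanSpace ℝ (Fin 2)) 1}).ncard : ℝ))
    (x : ℝ) (hx : x ∈ Set.Icc (1 : ℝ) 2)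
    (S : Set (Fin n))
    (hS : S = {i | (Metric.closedBall (p i) (r i) ∩
      Metric.sphere (0 : EuclideanSpace ℝ (Fin 2)) x).Nonempty}) :
    ∀ C : (G.induce Sᶜ).ConnectedComponent,
      (({v : ↥Sᶜ | (G.induce Sᶜ).connectedComponentMk v = C}).ncard : ℝ) ≤
        (9 / 10 : ℝ) * n := by
  intro C
  have hS' : ∀ i ∉ S, Disjoint (closedBall (p i) (r i)) (sphere 0 x) := by
    subst hS
    exact fun i hi => disjoint_iff_inter_eq_empty.mpr (not_nonempty_iff_eq_empty.mp hi)
  have hcenter : ∀ i, p i ∈ closedBall (p i) (r i) := fun i => mem_closedBall_self (hr i).le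
  change (C.supp.ncard : ℝ) ≤ _
  rw [← ncard_image_of_injective _ Subtype.val_injective]
  rcases C.subset_ball_or_subset_compl_closedBall (fun i => (convex_closedBall _ _).isPreconnected)
    (fun i j h => ((hG i j).mp h).2) hS' with hin | hout
  · have hsub : Subtype.val '' C.supp ⊆ {i | p i ∈ closedBall (0 : ℝ²) 2} :=
      image_subset_iff.mpr fun v hv =>
        ball_subset_closedBall (ball_subset_ball hx.2 (hin v hv (hcenter v)))
    calc _ ≤ (({i | p i ∈ closedBall (0 : ℝ²) 2}).ncard : ℝ) := by
          exact_mod_cast ncard_le_ncard hsub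
      _ ≤ 9 * (n / 10) := cast_ncard_closedBall_two_le p hdense
      _ = 9 / 10 * n := by ring
  · have hsub : Subtype.val '' C.supp ⊆ {i | p i ∈ closedBall (0 : ℝ²) 1}ᶜ :=
      image_subset_iff.mpr fun v hv h₁ =>
        hout v hv (hcenter v) (closedBall_subset_closedBall hx.1 h₁)
    calc _ ≤ (({i | p i ∈ closedBall (0 : ℝ²) 1}ᶜ).ncard : ℝ) := by
          exact_mod_cast ncard_le_ncard hsub
      _ ≤ Nat.card (Fin n) - n / 10 := cast_ncard_compl_le horigin
      _ = 9 / 10 * n := by rw [Nat.card_fin]; ring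

/-- Removing from the intersection graph of a family of pairwise interior-disjoint
disks all disks meeting the circle of radius `x ∈ [1,2]` centered at the origin leaves
connected components of size at most `(9/10) n`, provided every unit disk contains at
most `n/10` of the centers and the unit disk at the origin contains at least `n/10`
of the centers. -/
theorem separator_components_small
    (n : ℕ) (p : Fin n → EuclideanSpace ℝ (Fin 2)) (r : Fin n → ℝ)
    (hr : ∀ i, 0 < r i)
    (hdisj : Pairwise fun i j =>
      Disjoint (Metric.ball (p i) (r i)) (Metric.ball (p j) (r j)))
    (G : SimpleGraph (Fin n))
    (hG : ∀ i j, G.Adj i j ↔ i ≠ j ∧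
      (Metric.closedBall (p i) (r i) ∩ Metric.closedBall (p j) (r j)).Nonempty)
    (hdense : ∀ c : EuclideanSpace ℝ (Fin 2),
      (({i : Fin n | p i ∈ Metric.closedBall c 1}).ncard : ℝ) ≤ n / 10)
    (horigin : (n : ℝ) / 10 ≤
      (({i : Fin n | p i ∈ Metric.closedBall (0 : EuclideanSpace ℝ (Fin 2)) 1}).ncard : ℝ))
    (x : ℝ) (hx : x ∈ Set.Icc (1 : ℝ) 2)
    (S : Set (Fin n))
    (hS : S = {i | (Metric.closedBall (p i) (r i) ∩
      Metric.sphere (0 : EuclideanSpace ℝ (Fin 2)) x).Nonempty}) :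
    ∀ C : (G.induce Sᶜ).ConnectedComponent,
      (({v : ↥Sᶜ | (G.induce Sᶜ).connectedComponentMk v = C}).ncard : ℝ) ≤
        (9 / 10 : ℝ) * n :=
  separator_components_small_general n p r hr G hG hdense horigin x hx S hS
end

section
/- Let B be a closed disk in the Euclidean plane with center p and radius r > 0 that is not contained in the closed disk D₂ of radius 2 centered at the origin. If for some x ∈ [1,2] the circle of radius x centered at the origin intersects B, then the area of B ∩ D₂ is at least π·(2−x)²/4. -/
open MeasureTheory

/-- If a closed disk `B` of positive radius is not contained in the closed disk `D₂`
of radius 2 centered at the origin, and the circle of radius `x ∈ [1,2]` centered at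
the origin meets `B`, then the area of `B ∩ D₂` is at least `π (2 - x)² / 4`. -/
theorem lens_area_lower_bound
    (p : EuclideanSpace ℝ (Fin 2)) (r : ℝ) (hr : 0 < r)
    (hnotsub : ¬ Metric.closedBall p r ⊆
      Metric.closedBall (0 : EuclideanSpace ℝ (Fin 2)) 2)
    (x : ℝ) (hx : x ∈ Set.Icc (1 : ℝ) 2)
    (hhit : (Metric.sphere (0 : EuclideanSpace ℝ (Fin 2)) x ∩
      Metric.closedBall p r).Nonempty) :
    ENNReal.ofReal (Real.pi * (2 - x) ^ 2 / 4) ≤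
      volume (Metric.closedBall p r ∩
        Metric.closedBall (0 : EuclideanSpace ℝ (Fin 2)) 2) := by
  obtain ⟨hx1, hx2⟩ := hx
  obtain ⟨s, hs, hsB⟩ := hhit
  rw [Set.not_subset] at hnotsub
  obtain ⟨q, hqB, hqD⟩ := hnotsub
  rw [Metric.mem_closedBall, dist_zero_right] at hqD
  push_neg at hqD
  rw [Metric.mem_sphere, dist_zero_right] at hs
  rw [Metric.mem_closedBall] at hsB hqB
  set ρ : ℝ := (2 - x) / 2 with hρdef
  have hρ0 : 0 ≤ ρ := by simp only [hρdef]; linarith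
  -- r ≥ ρ
  have hrρ : ρ ≤ r := by
    have h1 : ‖q‖ - ‖s‖ ≤ ‖q - s‖ := norm_sub_norm_le q s
    have h2 : ‖q - s‖ = dist q s := (dist_eq_norm q s).symm
    have h3 : dist q s ≤ dist q p + dist p s := dist_triangle q p s
    have h4 : dist q p ≤ r := hqB
    have h5 : dist p s ≤ r := by rw [dist_comm]; exact hsB
    have : 2 < 2 * r + x := by
      have h6 : ‖q‖ ≤ dist q s + x := by rw [← h2, ← hs]; linarith
      have h7 : dist q s ≤ 2 * r := by linarith
      linarith
    simp only [hρdef]; linarith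
  -- p is not too far from origin
  have hpnorm : ‖p‖ ≤ x + r := by
    have h1 : ‖p‖ - ‖s‖ ≤ ‖p - s‖ := norm_sub_norm_le p s
    have h2 : ‖p - s‖ = dist p s := (dist_eq_norm p s).symm
    have h3 : dist p s ≤ r := by rw [dist_comm]; exact hsB
    rw [hs] at h1; linarith
  -- find center c of a disk of radius ρ inside both balls
  obtain ⟨c, hc1, hc2⟩ : ∃ c : EuclideanSpace ℝ (Fin 2),
      dist c p + ρ ≤ r ∧ ‖c‖ + ρ ≤ 2 := by
    by_cases hp : ‖p‖ ≤ (2 + x) / 2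
    · exact ⟨p, by simp [hrρ], by simp only [hρdef]; linarith⟩
    · push_neg at hp
      have hpne : ‖p‖ ≠ 0 := ne_of_gt (by linarith)
      refine ⟨((2 + x) / 2 / ‖p‖) • p, ?_, ?_⟩
      · have hdist : dist (((2 + x) / 2 / ‖p‖) • p) p = ‖p‖ - (2 + x) / 2 := by
          rw [dist_eq_norm]
          have he : ((2 + x) / 2 / ‖p‖) • p - p = (((2 + x) / 2 / ‖p‖) - 1) • p := by
            rw [sub_smul, one_smul]
          rw [he, norm_smul, Real.norm_eq_abs]
          rw [abs_of_nonpos (by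
            have : (2 + x) / 2 / ‖p‖ < 1 := (div_lt_one (by positivity)).2 hp
            linarith)]
          field_simp
          ring
        rw [hdist]
        have : ‖p‖ ≤ x + r := hpnorm
        simp only [hρdef]; linarith
      · rw [norm_smul, Real.norm_eq_abs, abs_of_nonneg (by positivity)]
        rw [div_mul_cancel₀ _ hpne]
        simp only [hρdef]; linarith
  have hsub : Metric.closedBall c ρ ⊆
      Metric.closedBall p r ∩ Metric.closedBall (0 : EuclideanSpace ℝ (Fin 2)) 2 := by
    intro y hy
    rw [Metric.mem_closedBall] at hy
    constructor
    · rw [Metric.mem_closedBall]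
      calc dist y p ≤ dist y c + dist c p := dist_triangle y c p
        _ ≤ ρ + dist c p := by linarith
        _ ≤ r := by linarith
    · rw [Metric.mem_closedBall, dist_zero_right]
      have h1 : ‖y‖ - ‖c‖ ≤ ‖y - c‖ := norm_sub_norm_le y c
      have h2 : ‖y - c‖ = dist y c := (dist_eq_norm y c).symm
      linarith
  refine le_trans ?_ (measure_mono hsub)
  rw [EuclideanSpace.volume_closedBall]
  simp only [Fintype.card_fin]
  have hG : Real.Gamma ((2 : ℕ) / 2 + 1) = 1 := by
    norm_num
  rw [hG]
  have : (Real.sqrt Real.pi) ^ (2 : ℕ) = Real.pi :=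
    Real.sq_sqrt Real.pi_pos.le
  rw [this]
  rw [← ENNReal.ofReal_pow hρ0, ← ENNReal.ofReal_mul (by positivity)]
  apply ENNReal.ofReal_le_ofReal
  rw [hρdef]; ring_nf; exact le_rfl
end

section
/- Let B be a closed disk in the Euclidean plane with center p and radius r > 0, and let D₂ be the closed disk of radius 2 centered at the origin. Then the Lebesgue measure of the set {x ∈ [1,2] : the circle of radius x centered at the origin intersects B} is at most 2·√(area(B ∩ D₂)/π). -/
/-!
A circle of radius `x` about the origin meets `closedBall p r` only if `|x - ‖p‖| ≤ r`, so the radii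
in question fill at most an interval `[a, b]` with `1 ≤ a` and `b ≤ 2`. The disk of radius
`(b - a) / 2` centred on the ray through `p` at distance `(a + b) / 2` from the origin lies inside both
`closedBall p r` and `closedBall 0 2`; comparing its area `π ((b - a) / 2)²` with the area of the
lens gives `b - a ≤ 2 √(area / π)`.
-/

open MeasureTheory Metric

section SeminormedAddCommGroup

variable {E : Type*} [SeminormedAddCommGroup E]

theorem abs_sub_norm_le_of_mem_sphere_inter_closedBall {p q : E} {x r : ℝ}
    (hq : q ∈ sphere (0 : E) x ∩ closedBall p r) : |x - ‖p‖| ≤ r := by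
  obtain ⟨hqx, hqp⟩ := hq
  rw [mem_sphere_zero_iff_norm] at hqx
  rw [mem_closedBall, dist_eq_norm] at hqp
  exact hqx ▸ (abs_norm_sub_norm_le q p).trans hqp

theorem radii_sphere_meeting_closedBall_subset_Icc (p : E) (r : ℝ) :
    {x : ℝ | (sphere (0 : E) x ∩ closedBall p r).Nonempty} ⊆ Set.Icc (‖p‖ - r) (‖p‖ + r) := by
  rintro x ⟨q, hq⟩
  have := abs_le.mp (abs_sub_norm_le_of_mem_sphere_inter_closedBall hq)
  constructor <;> linarith [this.1, this.2]

end SeminormedAddCommGroup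

section NormedSpace

variable {E : Type*} [NormedAddCommGroup E] [NormedSpace ℝ E]

theorem exists_norm_eq_one_and_eq_norm_smul [Nontrivial E] (p : E) :
    ∃ u : E, ‖u‖ = 1 ∧ p = ‖p‖ • u := by
  rcases eq_or_ne p 0 with rfl | hp
  · obtain ⟨u, hu⟩ := exists_norm_eq E zero_le_one
    exact ⟨u, hu, by simp⟩
  · refine ⟨‖p‖⁻¹ • p, by simp [norm_smul, hp], ?_⟩
    rw [smul_smul, mul_inv_cancel₀ (norm_ne_zero_iff.mpr hp), one_smul]

theorem exists_closedBall_subset_closedBall_inter_closedBall_zero [Nontrivial E] {p : E}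
    {r s t : ℝ} (hst : 0 ≤ s + t) (hs : ‖p‖ - r ≤ s) (ht : t ≤ ‖p‖ + r) :
    ∃ m : E, closedBall m ((t - s) / 2) ⊆ closedBall p r ∩ closedBall 0 t := by
  obtain ⟨u, hu, hpu⟩ := exists_norm_eq_one_and_eq_norm_smul p
  have hmp : dist (((s + t) / 2) • u) p = |(s + t) / 2 - ‖p‖| := by
    nth_rw 1 [dist_eq_norm, hpu]
    rw [← sub_smul, norm_smul, hu, mul_one, Real.norm_eq_abs]
  have hm0 : dist (((s + t) / 2) • u) 0 = (s + t) / 2 := by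
    rw [dist_zero_right, norm_smul, hu, mul_one, Real.norm_eq_abs, abs_of_nonneg (by linarith)]
  refine ⟨((s + t) / 2) • u, fun q hq => ⟨?_, ?_⟩⟩ <;> rw [mem_closedBall] at hq ⊢
  · have hcentre : |(s + t) / 2 - ‖p‖| ≤ r - (t - s) / 2 := abs_le.mpr ⟨by linarith, by linarith⟩
    linarith [dist_triangle q (((s + t) / 2) • u) p]
  · linarith [dist_triangle q (((s + t) / 2) • u) 0]

end NormedSpace

theorem le_sqrt_volume_div_pi_of_closedBall_subset {m : EuclideanSpace ℝ (Fin 2)} {ρ : ℝ}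
    {S : Set (EuclideanSpace ℝ (Fin 2))} (hS : volume S ≠ ⊤) (hmS : closedBall m ρ ⊆ S) :
    ρ ≤ Real.sqrt ((volume S).toReal / Real.pi) := by
  rcases lt_or_ge ρ 0 with hρ | hρ
  · exact hρ.le.trans (Real.sqrt_nonneg _)
  have harea : ρ ^ 2 * Real.pi ≤ (volume S).toReal := by
    have := ENNReal.toReal_mono hS (measure_mono (μ := volume) hmS)
    rwa [EuclideanSpace.volume_closedBall_fin_two, ENNReal.toReal_mul, ENNReal.toReal_pow,
      ENNReal.toReal_ofReal hρ, ENNReal.toReal_ofReal Real.pi_pos.le] at this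
  rw [Real.le_sqrt hρ (by positivity), le_div_iff₀ Real.pi_pos]
  exact harea

theorem measure_radii_hitting_disk_le_sqrt_lens_area_general
    (p : EuclideanSpace ℝ (Fin 2)) (r : ℝ) :
    volume {x : ℝ | x ∈ Set.Icc (1 : ℝ) 2 ∧
      (Metric.sphere (0 : EuclideanSpace ℝ (Fin 2)) x ∩ Metric.closedBall p r).Nonempty} ≤
      ENNReal.ofReal (2 * Real.sqrt
        ((volume (Metric.closedBall p r ∩
          Metric.closedBall (0 : EuclideanSpace ℝ (Fin 2)) 2)).toReal / Real.pi)) := by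
  set lens := closedBall p r ∩ closedBall (0 : EuclideanSpace ℝ (Fin 2)) 2
  set a := max 1 (‖p‖ - r)
  set b := min 2 (‖p‖ + r)
  have hradii : {x : ℝ | x ∈ Set.Icc (1 : ℝ) 2 ∧
      (sphere (0 : EuclideanSpace ℝ (Fin 2)) x ∩ closedBall p r).Nonempty} ⊆ Set.Icc a b :=
    fun x ⟨⟨h1, h2⟩, hx⟩ =>
      have hx := radii_sphere_meeting_closedBall_subset_Icc p r hx
      ⟨max_le h1 hx.1, le_min h2 hx.2⟩
  have hlen : b - a ≤ 2 * Real.sqrt ((volume lens).toReal / Real.pi) := by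
    rcases lt_or_ge b a with hba | hab
    · linarith [Real.sqrt_nonneg ((volume lens).toReal / Real.pi)]
    obtain ⟨m, hm⟩ := exists_closedBall_subset_closedBall_inter_closedBall_zero (p := p)
      (by linarith [le_max_left 1 (‖p‖ - r)]) (le_max_right 1 (‖p‖ - r)) (min_le_right 2 (‖p‖ + r))
    have hlens : closedBall m ((b - a) / 2) ⊆ lens :=
      hm.trans (Set.inter_subset_inter_right _ (closedBall_subset_closedBall (min_le_left _ _)))
    have hfin : volume lens ≠ ⊤ :=
      (isBounded_closedBall.subset Set.inter_subset_right).measure_lt_top.ne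
    linarith [le_sqrt_volume_div_pi_of_closedBall_subset hfin hlens]
  calc _ ≤ volume (Set.Icc a b) := measure_mono hradii
    _ = ENNReal.ofReal (b - a) := Real.volume_Icc
    _ ≤ _ := ENNReal.ofReal_le_ofReal hlen

/-- The measure of the set of radii `x ∈ [1,2]` for which the circle of radius `x`
centered at the origin meets a closed disk `B` of positive radius is at most
`2 √(area(B ∩ D₂)/π)`, where `D₂` is the closed disk of radius 2 at the origin. -/
theorem measure_radii_hitting_disk_le_sqrt_lens_area
    (p : EuclideanSpace ℝ (Fin 2)) (r : ℝ) (hr : 0 < r) :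
    volume {x : ℝ | x ∈ Set.Icc (1 : ℝ) 2 ∧
      (Metric.sphere (0 : EuclideanSpace ℝ (Fin 2)) x ∩ Metric.closedBall p r).Nonempty} ≤
      ENNReal.ofReal (2 * Real.sqrt
        ((volume (Metric.closedBall p r ∩
          Metric.closedBall (0 : EuclideanSpace ℝ (Fin 2)) 2)).toReal / Real.pi)) :=
  measure_radii_hitting_disk_le_sqrt_lens_area_general p r
end

section
/- Let B₀, …, B_{n-1} be pairwise interior-disjoint closed disks in the Euclidean plane with positive radii. Then the integral over x ∈ [1,2] (with respect to Lebesgue measure) of the number of indices i such that the circle of radius x centered at the origin intersects B_i is at most 4·√n. Equivalently, if x is chosen uniformly at random in [1,2], the expected number of disks B_i intersecting the circle of radius x centered at the origin is at most 4·√n. -/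
/-!
The disk `B(pᵢ, rᵢ)` meets the circle of radius `x ≥ 0` exactly when `x ∈ [‖pᵢ‖ - rᵢ, ‖pᵢ‖ + rᵢ]`,
so the integral is `∑ ℓᵢ`, where `ℓᵢ` is the length of that interval inside `[1, 2]`. The disk
centred on the ray through `pᵢ` at the midpoint of this piece, of radius `ℓᵢ / 2`, lies in
`B(pᵢ, rᵢ) ∩ B(0, 2)`. These small disks are pairwise disjoint, so comparing areas gives
`∑ ℓᵢ² ≤ 16`, and Cauchy–Schwarz gives `∑ ℓᵢ ≤ 4 √n`.
-/

open MeasureTheory Metric Set Module Function Finset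

section NormedSpace

variable {E : Type*} [NormedAddCommGroup E] [NormedSpace ℝ E] [Nontrivial E]

theorem exists_norm_eq_dist_eq_abs_sub (p : E) {d : ℝ} (hd : 0 ≤ d) :
    ∃ c : E, ‖c‖ = d ∧ dist c p = |d - ‖p‖| := by
  rcases eq_or_ne p 0 with rfl | hp
  · obtain ⟨c, hc⟩ := exists_norm_eq E hd
    exact ⟨c, hc, by simp [hc, abs_of_nonneg hd]⟩
  · have hp' : ‖p‖ ≠ 0 := norm_ne_zero_iff.mpr hp
    have hsub : (d / ‖p‖) • p - p = ((d - ‖p‖) / ‖p‖) • p := by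
      rw [sub_div, div_self hp', sub_smul, one_smul]
    refine ⟨(d / ‖p‖) • p, ?_, ?_⟩
    · rw [norm_smul, Real.norm_of_nonneg (by positivity), div_mul_cancel₀ _ hp']
    · rw [dist_eq_norm, hsub, norm_smul, Real.norm_eq_abs, abs_div, abs_norm,
        div_mul_cancel₀ _ hp']

theorem sphere_inter_closedBall_nonempty_iff (p : E) {r x : ℝ} (hx : 0 ≤ x) :
    (sphere (0 : E) x ∩ closedBall p r).Nonempty ↔ x ∈ Icc (‖p‖ - r) (‖p‖ + r) := by
  have hdist : (sphere (0 : E) x ∩ closedBall p r).Nonempty ↔ |x - ‖p‖| ≤ r := by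
    constructor
    · rintro ⟨q, hq, hqp⟩
      rw [mem_sphere_zero_iff_norm] at hq
      exact hq ▸ (abs_norm_sub_norm_le q p).trans (mem_closedBall_iff_norm.mp hqp)
    · intro h
      obtain ⟨c, hc, hcp⟩ := exists_norm_eq_dist_eq_abs_sub p hx
      exact ⟨c, mem_sphere_zero_iff_norm.mpr hc, mem_closedBall.mpr (hcp ▸ h)⟩
  rw [hdist, abs_sub_le_iff, Set.mem_Icc]
  constructor <;> rintro ⟨h₁, h₂⟩ <;> constructor <;> linarith

theorem exists_ball_subset_ball_inter_ball (p : E) (r : ℝ) {s t : ℝ} (hs : 0 ≤ s)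
    (hps : ‖p‖ - r ≤ s) (htp : t ≤ ‖p‖ + r) :
    ∃ c : E, ball c ((t - s) / 2) ⊆ ball p r ∩ ball 0 t := by
  rcases lt_or_ge t s with hts | hst
  · exact ⟨0, by rw [ball_eq_empty.mpr (by linarith)]; exact empty_subset _⟩
  obtain ⟨c, hc, hcp⟩ := exists_norm_eq_dist_eq_abs_sub p (d := (s + t) / 2) (by linarith)
  refine ⟨c, subset_inter (ball_subset_ball' ?_) (ball_subset_ball' ?_)⟩
  · rw [hcp, ← le_sub_iff_add_le', abs_sub_le_iff]
    constructor <;> linarith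
  · rw [dist_zero_right, hc]
    linarith

end NormedSpace

theorem sum_max_pow_finrank_le_of_pairwise_disjoint_ball_subset
    {E : Type*} [NormedAddCommGroup E] [NormedSpace ℝ E] [FiniteDimensional ℝ E] [Nontrivial E]
    {ι : Type*} [Fintype ι] {c : ι → E} {ρ : ι → ℝ} {x : E} {R : ℝ} (hR : 0 ≤ R)
    (hdisj : Pairwise (Disjoint on fun i => ball (c i) (ρ i)))
    (hsub : ∀ i, ball (c i) (ρ i) ⊆ ball x R) :
    ∑ i, max (ρ i) 0 ^ finrank ℝ E ≤ R ^ finrank ℝ E := by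
  borelize E
  set μ : Measure E := Measure.addHaar
  have hball_max : ∀ i, ball (c i) (max (ρ i) 0) = ball (c i) (ρ i) := by
    intro i; ext y
    simp only [mem_ball, lt_max_iff, or_iff_left dist_nonneg.not_gt]
  have hvol : ∑ i, μ (ball (c i) (max (ρ i) 0)) ≤ μ (ball x R) := by
    rw [← tsum_fintype (L := .unconditional _),
      ← measure_iUnion (by simpa only [hball_max]) fun _ => measurableSet_ball]
    exact measure_mono (iUnion_subset fun i => (hball_max i).trans_subset (hsub i))
  simp only [μ.addHaar_ball _ (le_max_right _ _), μ.addHaar_ball _ hR, ← Finset.sum_mul] at hvol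
  rwa [ENNReal.mul_le_mul_iff_left (measure_ball_pos μ 0 one_pos).ne' measure_ball_lt_top.ne,
    ← ENNReal.ofReal_sum_of_nonneg fun i _ => by positivity,
    ENNReal.ofReal_le_ofReal_iff (by positivity)] at hvol

theorem integral_ncard_setOf_mem_eq_sum_measureReal {α ι : Type*} [MeasurableSpace α]
    [Fintype ι] (μ : Measure α) [IsFiniteMeasure μ] {S : ι → Set α}
    (hS : ∀ i, MeasurableSet (S i)) :
    ∫ x, ({i | x ∈ S i}.ncard : ℝ) ∂μ = ∑ i, μ.real (S i) := by
  classical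
  have hcount : ∀ x, ({i | x ∈ S i}.ncard : ℝ) = ∑ i, (S i).indicator 1 x := by
    intro x
    simp only [indicator_apply, Pi.one_apply, Finset.sum_boole]
    rw [Set.ncard_eq_toFinset_card', Set.toFinset_ofPred]
  simp_rw [hcount]
  rw [integral_finsetSum _ fun i _ => (integrable_const 1).indicator (hS i)]
  simp only [integral_indicator_one (hS _)]

theorem Finset.sum_le_sqrt_card_mul_of_sum_sq_le {ι : Type*} (s : Finset ι) {f : ι → ℝ}
    {B : ℝ} (hB : 0 ≤ B) (h : ∑ i ∈ s, f i ^ 2 ≤ B ^ 2) : ∑ i ∈ s, f i ≤ √(#s) * B :=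
  calc ∑ i ∈ s, f i ≤ |∑ i ∈ s, f i| := le_abs_self _
    _ ≤ √(#s * B ^ 2) := Real.abs_le_sqrt (sq_sum_le_card_mul_sum_sq.trans (by gcongr))
    _ = √(#s) * B := by rw [Real.sqrt_mul (by positivity), Real.sqrt_sq hB]

theorem integral_count_hitting_circle_le_general
    (n : ℕ) (p : Fin n → EuclideanSpace ℝ (Fin 2)) (r : Fin n → ℝ)
    (hdisj : Pairwise fun i j =>
      Disjoint (Metric.ball (p i) (r i)) (Metric.ball (p j) (r j))) :
    (∫ x in Set.Icc (1 : ℝ) 2,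
      (({i : Fin n | (Metric.sphere (0 : EuclideanSpace ℝ (Fin 2)) x ∩
        Metric.closedBall (p i) (r i)).Nonempty}).ncard : ℝ)) ≤ 4 * Real.sqrt n := by
  set s : Fin n → ℝ := fun i => max (‖p i‖ - r i) 1
  set t : Fin n → ℝ := fun i => min (‖p i‖ + r i) 2
  set ρ : Fin n → ℝ := fun i => (t i - s i) / 2
  choose c hc using fun i => exists_ball_subset_ball_inter_ball (p i) (r i)
    (zero_le_one.trans (le_max_right _ _)) (le_max_left _ _) (min_le_left _ _)
  have hsq : ∑ i, max (ρ i) 0 ^ 2 ≤ 2 ^ 2 := by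
    simpa only [finrank_euclideanSpace, Fintype.card_fin] using
      sum_max_pow_finrank_le_of_pairwise_disjoint_ball_subset zero_le_two
        (fun i j hij => (hdisj hij).mono ((hc i).trans inter_subset_left)
          ((hc j).trans inter_subset_left))
        (fun i => (hc i).trans (inter_subset_right.trans (ball_subset_ball (min_le_right _ _))))
  calc _ = ∑ i, 2 * max (ρ i) 0 := by
        rw [setIntegral_congr_fun measurableSet_Icc
            (g := fun x => ({i | x ∈ Icc (‖p i‖ - r i) (‖p i‖ + r i)}.ncard : ℝ))
            fun x hx => by
              simp_rw [sphere_inter_closedBall_nonempty_iff _ (zero_le_one.trans hx.1)],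
          integral_ncard_setOf_mem_eq_sum_measureReal _ fun _ => measurableSet_Icc]
        refine Finset.sum_congr rfl fun i _ => ?_
        rw [measureReal_restrict_apply measurableSet_Icc, Icc_inter_Icc, Real.volume_real_Icc,
          mul_max_of_nonneg _ _ (zero_le_two (α := ℝ)), mul_zero, mul_div_cancel₀ _ two_ne_zero]
    _ = 2 * ∑ i, max (ρ i) 0 := (Finset.mul_sum ..).symm
    _ ≤ 2 * (√n * 2) := by
      gcongr
      simpa only [card_univ, Fintype.card_fin] using
        Finset.sum_le_sqrt_card_mul_of_sum_sq_le univ zero_le_two hsq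
    _ = 4 * √n := by ring

/-- For pairwise interior-disjoint closed disks of positive radii in the plane, the
integral over `x ∈ [1,2]` of the number of disks meeting the circle of radius `x`
centered at the origin is at most `4 √n`; i.e. for `x` uniform in `[1,2]`, the
expected number of disks meeting the circle is at most `4 √n`. -/
theorem integral_count_hitting_circle_le
    (n : ℕ) (p : Fin n → EuclideanSpace ℝ (Fin 2)) (r : Fin n → ℝ)
    (hr : ∀ i, 0 < r i)
    (hdisj : Pairwise fun i j =>
      Disjoint (Metric.ball (p i) (r i)) (Metric.ball (p j) (r j))) :
    (∫ x in Set.Icc (1 : ℝ) 2,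
      (({i : Fin n | (Metric.sphere (0 : EuclideanSpace ℝ (Fin 2)) x ∩
        Metric.closedBall (p i) (r i)).Nonempty}).ncard : ℝ)) ≤ 4 * Real.sqrt n :=
  integral_count_hitting_circle_le_general n p r hdisj
end

section
/- (Planar separator theorem for disk-packing graphs.) Let n ≥ 1 and let D₀, …, D_{n-1} be pairwise interior-disjoint closed disks in the Euclidean plane with positive radii, and let G be the simple graph on Fin n in which distinct i, j are adjacent if and only if D_i ∩ D_j ≠ ∅. Then there exists a set S of at most 4·√n vertices of G such that every connected component of the induced subgraph of G on the complement of S has at most (9/10)·n vertices. -/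
/-
Choose a closed ball `B(c, ρ)` containing more than `n / 10` centres such that every ball of
radius `(2√2/3) ρ` contains at most `n / 10` of them (take `ρ` close to the least radius of a
ball holding `n / 10 + 1` centres). Nine such balls cover `B(c, 2ρ)`, so at most `9n/10` centres
lie in `B(c, 2ρ)`, and fewer than `9n/10` lie outside `B(c, ρ)`.

A disk `B(p, r)` contains an inscribed disk, lying in the annulus `ρ ≤ |x - c| ≤ 2ρ`, whose
diameter `w` is the length of `[|p - c| - r, |p - c| + r] ∩ [ρ, 2ρ]`. These inscribed disks are
disjoint and the annulus has area `3πρ²`, so `∑ w² ≤ 12ρ²`, and `∑ w ≤ √(12n) ρ` by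
Cauchy–Schwarz. Averaging over `s ∈ [ρ, 2ρ]`, some circle `|x - c| = s` meets at most
`√(12n) ≤ 4√n` disks. Every other disk lies strictly inside or strictly outside this circle, and
touching disks lie on the same side, so each component lies in `B(c, 2ρ)` or outside `B(c, ρ)`.
For `n ≤ 16` all vertices form a separator.
-/

open Metric Set Function MeasureTheory Real

local notation "ℝ²" => EuclideanSpace ℝ (Fin 2)

namespace SimpleGraph

variable {V : Type*} {G : SimpleGraph V}

theorem Reachable.mem_of_forall_adj {s : Set V} (hs : ∀ u v, G.Adj u v → u ∈ s → v ∈ s)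
    {u v : V} (h : G.Reachable u v) (hu : u ∈ s) : v ∈ s := by
  obtain ⟨w⟩ := h
  induction w with
  | nil => exact hu
  | cons hadj _ ih => exact ih (hs _ _ hadj hu)

theorem ConnectedComponent.supp_subset_or_subset_compl {s : Set V}
    (hs : ∀ u v, G.Adj u v → u ∈ s → v ∈ s) (C : G.ConnectedComponent) :
    C.supp ⊆ s ∨ C.supp ⊆ sᶜ := by
  by_contra! h
  obtain ⟨⟨u, huC, hu⟩, ⟨v, hvC, hv⟩⟩ := And.intro (not_subset.1 h.1) (not_subset.1 h.2)
  exact hu ((C.reachable_of_mem_supp hvC huC).mem_of_forall_adj hs (not_not.1 hv))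

theorem ncard_supp_induce_compl_le_max [Finite V] {S I : Set V}
    (hI : ∀ u v, G.Adj u v → u ∈ I → v ∉ S → v ∈ I) (C : (G.induce Sᶜ).ConnectedComponent) :
    C.supp.ncard ≤ max I.ncard (Sᶜ \ I).ncard := by
  have hclosed : ∀ u v : ↥Sᶜ, (G.induce Sᶜ).Adj u v → u ∈ Subtype.val ⁻¹' I →
      v ∈ Subtype.val ⁻¹' I := fun u v huv hu => hI u v huv hu v.2
  rcases C.supp_subset_or_subset_compl hclosed with hC | hC
  · exact le_max_of_le_left <|
      ncard_le_ncard_of_injOn Subtype.val (fun v hv => hC hv) Subtype.val_injective.injOn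
  · exact le_max_of_le_right <|
      ncard_le_ncard_of_injOn Subtype.val (fun v hv => ⟨v.2, hC hv⟩) Subtype.val_injective.injOn

end SimpleGraph

section MetricSpace

variable {ι α : Type*}

theorem ncard_supp_induce_le_of_sphere [Finite ι] [PseudoMetricSpace α] {G : SimpleGraph ι}
    {p : ι → α} {r : ι → ℝ} (hr : ∀ i, 0 ≤ r i)
    (hG : ∀ i j, G.Adj i j → (closedBall (p i) (r i) ∩ closedBall (p j) (r j)).Nonempty)
    (c : α) (s : ℝ)
    (C : (G.induce {i | s ∈ Icc (dist (p i) c - r i) (dist (p i) c + r i)}ᶜ).ConnectedComponent) :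
    C.supp.ncard ≤ max {i | p i ∈ ball c s}.ncard {i | p i ∉ closedBall c s}.ncard := by
  refine (SimpleGraph.ncard_supp_induce_compl_le_max (I := {i | dist (p i) c + r i < s}) ?_
    C).trans (max_le_max (ncard_le_ncard fun i hi => ?_) (ncard_le_ncard fun i hi => ?_))
  · intro u v huv hu hv
    have := dist_le_add_of_nonempty_closedBall_inter_closedBall (hG u v huv)
    have := dist_triangle_left (p v) c (p u)
    simp only [mem_ofPred_eq, mem_Icc, not_and_or, not_le] at hu hv ⊢
    grind
  · simp only [mem_ofPred_eq, mem_ball] at hi ⊢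
    linarith [hr i]
  · simp only [mem_sdiff, mem_compl_iff, mem_ofPred_eq, mem_Icc, not_and_or, not_le,
      mem_closedBall] at hi ⊢
    grind

variable [MetricSpace α]

theorem injective_of_pairwise_disjoint_ball {p : ι → α} {r : ι → ℝ} (hr : ∀ i, 0 < r i)
    (hdisj : Pairwise fun i j => Disjoint (ball (p i) (r i)) (ball (p j) (r j))) :
    Injective p := fun i j h =>
  hdisj.eq (not_disjoint_iff.2 ⟨p i, mem_ball_self (hr i), h ▸ mem_ball_self (hr j)⟩)

theorem exists_pos_le_dist_of_injective [Finite ι] {p : ι → α} (hp : Injective p) :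
    ∃ δ > 0, Pairwise fun i j => δ ≤ dist (p i) (p j) := by
  classical
  rcases isEmpty_or_nonempty ι with hι | hι
  · exact ⟨1, one_pos, fun i => isEmptyElim i⟩
  obtain ⟨k, hk⟩ := Finite.exists_min fun ij : ι × ι =>
    if ij.1 = ij.2 then 1 else dist (p ij.1) (p ij.2)
  refine ⟨_, ?_, fun i j hij => by simpa [hij] using hk (i, j)⟩
  split_ifs with h
  exacts [one_pos, dist_pos.2 (hp.ne h)]

theorem exists_closedBall_ncard_ge_forall_ncard_lt [Finite ι] {p : ι → α} (hp : Injective p)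
    {m : ℕ} (hm : 2 ≤ m) (hmι : m ≤ Nat.card ι) {q : ℝ} (hq₀ : 0 < q) (hq₁ : q < 1) :
    ∃ c ρ, 0 < ρ ∧ m ≤ (p ⁻¹' closedBall c ρ).ncard ∧
      ∀ c', (p ⁻¹' closedBall c' (q * ρ)).ncard < m := by
  set A := {ρ : ℝ | ∃ c, m ≤ (p ⁻¹' closedBall c ρ).ncard}
  obtain ⟨δ, hδ, hsep⟩ := exists_pos_le_dist_of_injective hp
  have hlow : δ / 2 ∈ lowerBounds A := by
    rintro ρ ⟨c, hc⟩
    obtain ⟨i, j, hi, hj, hij⟩ := (one_lt_ncard_iff (toFinite _)).1 (by omega :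
      1 < (p ⁻¹' closedBall c ρ).ncard)
    linarith [hsep hij, dist_triangle_right (p i) (p j) c, mem_closedBall.1 hi,
      mem_closedBall.1 hj]
  have hne : A.Nonempty := by
    obtain ⟨i₀⟩ : Nonempty ι := (Nat.card_pos_iff.1 (by omega)).1
    obtain ⟨R, hR⟩ := (finite_range p).isBounded.subset_closedBall (p i₀)
    refine ⟨R, p i₀, ?_⟩
    rwa [eq_univ_of_forall (s := p ⁻¹' closedBall (p i₀) R) fun i => hR (mem_range_self i),
      ncard_univ]
  have hA : 0 < sInf A := (half_pos hδ).trans_le (le_csInf hne hlow)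
  obtain ⟨ρ, ⟨c, hc⟩, hρ⟩ :=
    exists_lt_of_csInf_lt hne ((lt_div_iff₀ hq₀).2 (mul_lt_of_lt_one_right hA hq₁))
  refine ⟨c, ρ, hA.trans_le (csInf_le ⟨_, hlow⟩ ⟨c, hc⟩), hc, fun c' => not_le.1 fun h => ?_⟩
  have := csInf_le ⟨_, hlow⟩ (⟨c', h⟩ : q * ρ ∈ A)
  rw [lt_div_iff₀ hq₀] at hρ
  linarith [mul_comm ρ q]

end MetricSpace

theorem ncard_preimage_le_card_mul {ι β κ : Type*} [Finite ι] [Fintype κ] {p : ι → β}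
    {K : Set β} {T : κ → Set β} (hK : K ⊆ ⋃ k, T k) {N : ℕ}
    (hN : ∀ k, (p ⁻¹' T k).ncard ≤ N) : (p ⁻¹' K).ncard ≤ Fintype.card κ * N :=
  calc (p ⁻¹' K).ncard ≤ (⋃ k, p ⁻¹' T k).ncard := by
        rw [← preimage_iUnion]; exact ncard_le_ncard (preimage_mono hK)
    _ ≤ ∑ k, (p ⁻¹' T k).ncard := ncard_iUnion_le_of_fintype _
    _ ≤ ∑ _k : κ, N := Finset.sum_le_sum fun k _ => hN k
    _ = Fintype.card κ * N := by simp

section Radial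

variable {E : Type*} [NormedAddCommGroup E] [NormedSpace ℝ E] [Nontrivial E]

theorem exists_norm_eq_one_eq_add_dist_smul (p c : E) :
    ∃ u : E, ‖u‖ = 1 ∧ p = c + dist p c • u := by
  by_cases h : p = c
  · obtain ⟨u, hu⟩ := exists_norm_eq E zero_le_one
    exact ⟨u, hu, by simp [h]⟩
  · have hpc : ‖p - c‖ ≠ 0 := norm_ne_zero_iff.2 (sub_ne_zero.2 h)
    refine ⟨‖p - c‖⁻¹ • (p - c), ?_, ?_⟩
    · rw [norm_smul, norm_inv, norm_norm, inv_mul_cancel₀ hpc]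
    · rw [dist_eq_norm, smul_smul, mul_inv_cancel₀ hpc, one_smul, add_sub_cancel]

theorem exists_ball_subset_ball_inter_annulus (p c : E) {r a b : ℝ} (ha : 0 ≤ a) (hab : a ≤ b)
    (har : dist p c - r ≤ a) (hbr : b ≤ dist p c + r) :
    ∃ y, ball y ((b - a) / 2) ⊆ ball p r ∩ (closedBall c b \ ball c a) := by
  obtain ⟨u, hu, hp⟩ := exists_norm_eq_one_eq_add_dist_smul p c
  set d := dist p c
  set y := c + ((a + b) / 2) • u
  have hyc : dist y c = (a + b) / 2 := by
    rw [dist_eq_norm, add_sub_cancel_left, norm_smul, hu, mul_one,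
      Real.norm_of_nonneg (by linarith)]
  have hyp : dist y p = |(a + b) / 2 - d| := by
    rw [hp, dist_eq_norm, add_sub_add_left_eq_sub, ← sub_smul, norm_smul, hu, mul_one,
      Real.norm_eq_abs]
  refine ⟨y, subset_inter (ball_subset_ball' ?_) (subset_sdiff.2 ⟨?_, ?_⟩)⟩
  · have : |(a + b) / 2 - d| ≤ r - (b - a) / 2 := abs_le.2 ⟨by linarith, by linarith⟩
    linarith
  · exact ball_subset_closedBall.trans (closedBall_subset_closedBall' (by linarith))
  · exact ball_disjoint_ball (by linarith)

theorem exists_ball_subset_ball_inter_annulus' (p c : E) (r : ℝ) {α β : ℝ} (hα : 0 ≤ α) :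
    ∃ y, ball y (volume.real (Icc (dist p c - r) (dist p c + r) ∩ Icc α β) / 2) ⊆
      ball p r ∩ (closedBall c β \ ball c α) := by
  rw [Icc_inter_Icc, Real.volume_real_Icc]
  rcases le_total (max (dist p c - r) α) (min (dist p c + r) β) with h | h
  · obtain ⟨y, hy⟩ := exists_ball_subset_ball_inter_annulus p c (le_max_of_le_right hα) h
      (le_max_left _ _) (min_le_left _ _)
    refine ⟨y, ?_⟩
    rw [max_eq_left (sub_nonneg.2 h)]
    exact hy.trans (inter_subset_inter_right _ (sdiff_subset_sdiff
      (closedBall_subset_closedBall (min_le_right _ _)) (ball_subset_ball (le_max_right _ _))))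
  · refine ⟨p, ?_⟩
    rw [max_eq_right (sub_nonpos.2 h), zero_div, ball_zero]
    exact empty_subset _

end Radial

theorem exists_mem_Icc_ncard_mul_le_sum {ι : Type*} [Fintype ι] (a b : ι → ℝ) {α β : ℝ}
    (hαβ : α < β) :
    ∃ s ∈ Icc α β, ({i | s ∈ Icc (a i) (b i)}.ncard : ℝ) * (β - α) ≤
      ∑ i, volume.real (Icc (a i) (b i) ∩ Icc α β) := by
  classical
  set f : ℝ → ℝ := fun s => ∑ i, (Icc (a i) (b i)).indicator 1 s
  have hf : ∀ s, f s = {i | s ∈ Icc (a i) (b i)}.ncard := by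
    intro s
    rw [ncard_eq_toFinset_card', toFinset_ofPred, Finset.card_filter]
    push_cast
    simp only [f, indicator_apply, Pi.one_apply]
  have hint : ∀ i, IntegrableOn ((Icc (a i) (b i)).indicator (1 : ℝ → ℝ)) (Icc α β) :=
    fun i => (integrableOn_const measure_Icc_lt_top.ne).indicator measurableSet_Icc
  obtain ⟨s, hs, hle⟩ := exists_le_setAverage (f := f) (μ := volume) (s := Icc α β)
    (by simp [hαβ]) (by simp) (integrable_finsetSum _ fun i _ => hint i)
  refine ⟨s, hs, ?_⟩
  rw [setAverage_eq, integral_finsetSum _ fun i _ => hint i, hf] at hle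
  simp only [integral_indicator_one measurableSet_Icc, measureReal_restrict_apply measurableSet_Icc,
    Real.volume_real_Icc_of_le hαβ.le, smul_eq_mul] at hle
  rwa [← le_div_iff₀ (sub_pos.2 hαβ), div_eq_inv_mul]

theorem EuclideanSpace.volume_real_ball_fin_two (x : ℝ²) {t : ℝ} (ht : 0 ≤ t) :
    volume.real (ball x t) = π * t ^ 2 := by
  simp [measureReal_def, ENNReal.toReal_ofReal ht, pi_nonneg, mul_comm]

theorem EuclideanSpace.volume_real_closedBall_fin_two (x : ℝ²) {t : ℝ} (ht : 0 ≤ t) :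
    volume.real (closedBall x t) = π * t ^ 2 := by
  simp [measureReal_def, ENNReal.toReal_ofReal ht, pi_nonneg, mul_comm]

theorem sum_sq_le_of_pairwise_disjoint_ball_subset_annulus {ι : Type*} [Fintype ι]
    {y : ι → ℝ²} {t : ι → ℝ} (ht : ∀ i, 0 ≤ t i)
    (hdisj : Pairwise fun i j => Disjoint (ball (y i) (t i)) (ball (y j) (t j)))
    {c : ℝ²} {R₁ R₂ : ℝ} (hR₁ : 0 ≤ R₁) (hR : R₁ ≤ R₂)
    (hsub : ∀ i, ball (y i) (t i) ⊆ closedBall c R₂ \ ball c R₁) :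
    ∑ i, t i ^ 2 ≤ R₂ ^ 2 - R₁ ^ 2 := by
  have hvol : ∑ i, volume.real (ball (y i) (t i)) ≤
      volume.real (closedBall c R₂ \ ball c R₁) := by
    rw [← measureReal_biUnion_finset (fun i _ j _ hij => hdisj hij) fun i _ => measurableSet_ball]
    exact measureReal_mono (iUnion₂_subset fun i _ => hsub i)
      (measure_ne_top_of_subset sdiff_subset measure_closedBall_lt_top.ne)
  rw [measureReal_sdiff (ball_subset_closedBall.trans (closedBall_subset_closedBall hR))
      measurableSet_ball measure_closedBall_lt_top.ne,
    EuclideanSpace.volume_real_closedBall_fin_two c (hR₁.trans hR),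
    EuclideanSpace.volume_real_ball_fin_two c hR₁] at hvol
  simp only [EuclideanSpace.volume_real_ball_fin_two _ (ht _), ← Finset.mul_sum] at hvol
  nlinarith [pi_pos]

theorem exists_circle_meeting_few_disks {ι : Type*} [Fintype ι] {p : ι → ℝ²} {r : ι → ℝ}
    (hdisj : Pairwise fun i j => Disjoint (ball (p i) (r i)) (ball (p j) (r j)))
    (c : ℝ²) {ρ : ℝ} (hρ : 0 < ρ) :
    ∃ s ∈ Icc ρ (2 * ρ), ({i | s ∈ Icc (dist (p i) c - r i) (dist (p i) c + r i)}.ncard : ℝ) ≤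
      √(12 * Nat.card ι) := by
  set w := fun i => volume.real (Icc (dist (p i) c - r i) (dist (p i) c + r i) ∩ Icc ρ (2 * ρ))
  choose y hy using fun i =>
    exists_ball_subset_ball_inter_annulus' (p i) c (r i) (β := 2 * ρ) hρ.le
  have hsq : ∑ i, (w i / 2) ^ 2 ≤ (2 * ρ) ^ 2 - ρ ^ 2 :=
    sum_sq_le_of_pairwise_disjoint_ball_subset_annulus (fun i => by positivity)
      (fun i j hij => (hdisj hij).mono ((hy i).trans inter_subset_left)
        ((hy j).trans inter_subset_left))
      hρ.le (by linarith) fun i => (hy i).trans inter_subset_right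
  obtain ⟨s, hs, hcount⟩ := exists_mem_Icc_ncard_mul_le_sum (fun i => dist (p i) c - r i)
    (fun i => dist (p i) c + r i) (by linarith : ρ < 2 * ρ)
  refine ⟨s, hs, le_sqrt_of_sq_le ?_⟩
  set N := ({i | s ∈ Icc (dist (p i) c - r i) (dist (p i) c + r i)}.ncard : ℝ)
  have hcs : (∑ i, w i) ^ 2 ≤ Nat.card ι * ∑ i, w i ^ 2 := by
    simpa using sq_sum_le_card_mul_sum_sq (s := Finset.univ) (f := w)
  have hsq' : ∑ i, w i ^ 2 ≤ 12 * ρ ^ 2 := by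
    simp only [div_pow, ← Finset.sum_div] at hsq
    linarith
  have hN : (N * ρ) ^ 2 ≤ (∑ i, w i) ^ 2 := pow_le_pow_left₀ (by positivity) (by linarith) 2
  have : N ^ 2 * ρ ^ 2 ≤ 12 * Nat.card ι * ρ ^ 2 := by
    nlinarith [(Nat.cast_nonneg (Nat.card ι) : (0 : ℝ) ≤ _)]
  exact le_of_mul_le_mul_right this (by positivity)

theorem exists_fin_three_abs_sub_le {ρ u : ℝ} (hu : |u| ≤ 2 * ρ) :
    ∃ j : Fin 3, |u - ((j : ℝ) - 1) * (4 * ρ / 3)| ≤ 2 * ρ / 3 := by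
  rw [abs_le] at hu
  rcases le_or_gt u (-(2 * ρ / 3)) with h₀ | h₀
  · exact ⟨0, abs_le.2 ⟨by norm_num; linarith, by norm_num; linarith⟩⟩
  rcases le_or_gt u (2 * ρ / 3) with h₁ | h₁
  · exact ⟨1, abs_le.2 ⟨by norm_num; linarith, by norm_num; linarith⟩⟩
  · exact ⟨2, abs_le.2 ⟨by norm_num; linarith, by norm_num; linarith⟩⟩

theorem closedBall_subset_iUnion_grid {d : ℕ} (c : EuclideanSpace ℝ (Fin d)) (ρ : ℝ) :
    closedBall c (2 * ρ) ⊆ ⋃ j : Fin d → Fin 3,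
      closedBall (WithLp.toLp 2 fun i => c i + ((j i : ℝ) - 1) * (4 * ρ / 3)) (√d * 2 / 3 * ρ) := by
  intro x hx
  choose j hj using fun i =>
    exists_fin_three_abs_sub_le ((PiLp.dist_apply_le x c i).trans (mem_closedBall.1 hx))
  have hρ : 0 ≤ ρ := by linarith [dist_nonneg.trans (mem_closedBall.1 hx)]
  have hradius : √d * 2 / 3 * ρ = √(∑ _i : Fin d, (2 * ρ / 3) ^ 2) := by
    rw [Finset.sum_const, Finset.card_univ, Fintype.card_fin, nsmul_eq_mul,
      sqrt_mul (by positivity), sqrt_sq (by positivity)]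
    ring
  refine mem_iUnion.2 ⟨j, mem_closedBall.2 ?_⟩
  rw [EuclideanSpace.dist_eq, hradius]
  gcongr with i
  simpa [Real.dist_eq, sub_add_eq_sub_sub] using hj i

theorem exists_closedBall_balanced {ι : Type*} [Finite ι] {p : ι → ℝ²} (hp : Injective p)
    (hι : 10 ≤ Nat.card ι) :
    ∃ c ρ, 0 < ρ ∧ 10 * (p ⁻¹' closedBall c ρ)ᶜ.ncard ≤ 9 * Nat.card ι ∧
      10 * (p ⁻¹' closedBall c (2 * ρ)).ncard ≤ 9 * Nat.card ι := by
  have hq : √2 * 2 / 3 < 1 := by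
    have : √2 < 3 / 2 := (sqrt_lt' (by norm_num)).2 (by norm_num)
    linarith
  obtain ⟨c, ρ, hρ, hin, hsparse⟩ := exists_closedBall_ncard_ge_forall_ncard_lt hp
    (m := Nat.card ι / 10 + 1) (by omega) (by omega) (by positivity) hq
  refine ⟨c, ρ, hρ, ?_, ?_⟩
  · have := ncard_add_ncard_compl (p ⁻¹' closedBall c ρ)
    omega
  · have := ncard_preimage_le_card_mul (closedBall_subset_iUnion_grid c ρ)
      fun j => Nat.le_of_lt_succ (by simpa using hsparse _)
    simp only [Fintype.card_fun, Fintype.card_fin] at this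
    omega

theorem planar_separator_disk_packing_general
    (n : ℕ) (p : Fin n → EuclideanSpace ℝ (Fin 2)) (r : Fin n → ℝ)
    (hr : ∀ i, 0 < r i)
    (hdisj : Pairwise fun i j =>
      Disjoint (Metric.ball (p i) (r i)) (Metric.ball (p j) (r j)))
    (G : SimpleGraph (Fin n))
    (hG : ∀ i j, G.Adj i j ↔ i ≠ j ∧
      (Metric.closedBall (p i) (r i) ∩ Metric.closedBall (p j) (r j)).Nonempty) :
    ∃ S : Set (Fin n), (S.ncard : ℝ) ≤ 4 * Real.sqrt n ∧
      ∀ C : (G.induce Sᶜ).ConnectedComponent,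
        (({v : ↥Sᶜ | (G.induce Sᶜ).connectedComponentMk v = C}).ncard : ℝ) ≤
          (9 / 10 : ℝ) * n := by
  by_cases hn : n ≤ 16
  · refine ⟨univ, ?_, fun C => absurd C.nonempty_supp.some.2 (by simp)⟩
    have : √n ≤ 4 := sqrt_le_iff.2 ⟨by norm_num, by norm_num; exact_mod_cast hn⟩
    simp only [ncard_univ, Nat.card_eq_fintype_card, Fintype.card_fin]
    nlinarith [mul_self_sqrt (Nat.cast_nonneg (α := ℝ) n), sqrt_nonneg n]
  obtain ⟨c, ρ, hρ, hout, hin⟩ :=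
    exists_closedBall_balanced (injective_of_pairwise_disjoint_ball hr hdisj) (by simp; omega)
  obtain ⟨s, ⟨hρs, hs2ρ⟩, hS⟩ := exists_circle_meeting_few_disks hdisj c hρ
  refine ⟨_, hS.trans ?_, fun C => ?_⟩
  · rw [Nat.card_fin]
    calc √(12 * n) ≤ √(4 ^ 2 * n) := sqrt_le_sqrt (by linarith [(n.cast_nonneg : (0 : ℝ) ≤ n)])
      _ = 4 * √n := by rw [sqrt_mul (by norm_num), sqrt_sq (by norm_num)]
  have hC := ncard_supp_induce_le_of_sphere (fun i => (hr i).le)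
    (fun i j h => ((hG i j).1 h).2) c s C
  have hinside : {i | p i ∈ ball c s}.ncard ≤ (p ⁻¹' closedBall c (2 * ρ)).ncard :=
    ncard_le_ncard fun i hi => closedBall_subset_closedBall hs2ρ (ball_subset_closedBall hi)
  have houtside : {i | p i ∉ closedBall c s}.ncard ≤ (p ⁻¹' closedBall c ρ)ᶜ.ncard :=
    ncard_le_ncard fun i hi h => hi (closedBall_subset_closedBall hρs h)
  have : 10 * C.supp.ncard ≤ 9 * n := by
    simp only [Nat.card_fin, le_max_iff] at hout hin hC
    omega
  change (C.supp.ncard : ℝ) ≤ 9 / 10 * n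
  have : (10 * C.supp.ncard : ℝ) ≤ 9 * n := by exact_mod_cast this
  linarith

/-- Planar separator theorem for disk-packing graphs: the intersection graph of `n ≥ 1`
pairwise interior-disjoint closed disks of positive radii in the plane has a separator
`S` of at most `4 √n` vertices whose removal leaves connected components with at most
`(9/10) n` vertices each. -/
theorem planar_separator_disk_packing
    (n : ℕ) (hn : 1 ≤ n) (p : Fin n → EuclideanSpace ℝ (Fin 2)) (r : Fin n → ℝ)
    (hr : ∀ i, 0 < r i)
    (hdisj : Pairwise fun i j =>
      Disjoint (Metric.ball (p i) (r i)) (Metric.ball (p j) (r j)))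
    (G : SimpleGraph (Fin n))
    (hG : ∀ i j, G.Adj i j ↔ i ≠ j ∧
      (Metric.closedBall (p i) (r i) ∩ Metric.closedBall (p j) (r j)).Nonempty) :
    ∃ S : Set (Fin n), (S.ncard : ℝ) ≤ 4 * Real.sqrt n ∧
      ∀ C : (G.induce Sᶜ).ConnectedComponent,
        (({v : ↥Sᶜ | (G.induce Sᶜ).connectedComponentMk v = C}).ncard : ℝ) ≤
          (9 / 10 : ℝ) * n :=
  planar_separator_disk_packing_general n p r hr hdisj G hG
end
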